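/- arXiv:1409.3017 — 3 statements merged into one kernel-verified Lean document; each statement's English description precedes it below -/
import Mathlib

section
/- Let α > 0 and let ν_α be the product probability measure ⊗_p m_α on the infinite polydisc 𝔻^∞ with coordinates indexed by the prime numbers, where dm_α(w) = Γ(α)^{−1} (log(1/|w|²))^{α−1} dm(w) and m is normalized Lebesgue area measure on 𝔻. Then for every finitely supported sequence (a_n)_{n≥1} of complex numbers, ∫_{𝔻^∞} |Σ_{n=1}^∞ a_n z(n)|² dν_α(z) = Σ_{n=1}^∞ |a_n|²/d(n)^α, where z(n) := ∏_p z_p^{κ_p} for n = ∏_p p^{κ_p} and d(n) is the number of divisors of n. -/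
open Complex Filter MeasureTheory Finset

noncomputable section

/-- `numDiv n` is the number of divisors `d(n)` of `n`. -/
def numDiv (n : ℕ) : ℕ := n.divisors.card

/-- Lebesgue area measure on the open unit disc `𝔻 ⊆ ℂ`, normalized so that `𝔻` has total
mass `1`. -/
def normAreaDisc : Measure ℂ :=
  (ENNReal.ofReal Real.pi)⁻¹ • (volume.restrict (Metric.ball (0 : ℂ) 1))

/-- The measure `dm_α(w) = Γ(α)⁻¹ (log(1/|w|²))^{α-1} dm(w)` on the unit disc. -/
def mAlpha (α : ℝ) : Measure ℂ :=
  normAreaDisc.withDensity fun w =>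
    ENNReal.ofReal ((Real.Gamma α)⁻¹ * (Real.log (1 / ‖w‖ ^ 2)) ^ (α - 1))

/-- The completely multiplicative extension `z(n) = ∏_p z_p^{κ_p}` of a point
`z ∈ ℂ^{primes}`, where `n = ∏_p p^{κ_p}`. -/
def primeExt (z : Nat.Primes → ℂ) (n : ℕ) : ℂ :=
  n.factorization.prod fun p k => (if hp : p.Prime then z ⟨p, hp⟩ else 0) ^ k

/-! The monomials `z ↦ z(n)` are orthogonal in `L²(ν_α)`. Indeed `ν_α` is Mathlib's
`Measure.infinitePi` of the `m_α` (the two agree on boxes), so `∫ z(m) conj (z(n)) dν_α` factors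
over the primes dividing `mn` into one-variable moments `∫ w^j conj(w)^k dm_α`. In polar
coordinates the angular integral kills `j ≠ k`, and for `j = k` the substitution
`r = exp (-u/2)` turns the radial integral into `Γ(α) / (2 (j+1)^α)`, so the moment is `(j+1)^(-α)`.
As `d(n) = ∏_p (κ_p + 1)`, this gives `‖z(n)‖² = d(n)^(-α)`, and the identity is Parseval's for
this orthogonal family. -/

open Real ComplexConjugate

lemma image_exp_neg_half_Ioi : (fun u : ℝ => Real.exp (-u / 2)) '' Set.Ioi 0 = Set.Ioo 0 1 := by
  ext r
  refine ⟨?_, fun ⟨hr0, hr1⟩ => ⟨-2 * Real.log r, ?_, ?_⟩⟩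
  · rintro ⟨u, hu, rfl⟩
    exact ⟨Real.exp_pos _, Real.exp_lt_one_iff.mpr (by linarith [Set.mem_Ioi.mp hu])⟩
  · simp only [Set.mem_Ioi]; linarith [Real.log_neg hr0 hr1]
  · simp [Real.exp_log hr0]

lemma integral_Ioo_pow_mul_neg_two_log_rpow {α : ℝ} (hα : 0 < α) (k : ℕ) :
    ∫ r in Set.Ioo (0 : ℝ) 1, r ^ (2 * k + 1) * (-2 * Real.log r) ^ (α - 1) =
      Real.Gamma α / (2 * ((k : ℝ) + 1) ^ α) := by
  have hk : (0 : ℝ) < k + 1 := by positivity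
  rw [← image_exp_neg_half_Ioi, integral_image_eq_integral_abs_deriv_smul measurableSet_Ioi
    (fun u _ => ((hasDerivAt_neg' u).div_const 2).exp.hasDerivWithinAt)
    (fun u _ v _ h => by simpa using Real.exp_injective h)]
  have hsubst : ∀ u ∈ Set.Ioi (0 : ℝ), |Real.exp (-u / 2) * (-1 / 2)| •
      (Real.exp (-u / 2) ^ (2 * k + 1) * (-2 * Real.log (Real.exp (-u / 2))) ^ (α - 1)) =
        2⁻¹ * (u ^ (α - 1) * Real.exp (-((k + 1) * u))) := by
    intro u _
    rw [Real.log_exp, abs_mul, abs_of_pos (Real.exp_pos _), smul_eq_mul, ← Real.exp_nat_mul,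
      show -2 * (-u / 2) = u by ring,
      show Real.exp (-((k + 1) * u)) =
        Real.exp (-u / 2) * Real.exp (((2 * k + 1 : ℕ) : ℝ) * (-u / 2)) by
      rw [← Real.exp_add]; push_cast; ring_nf]
    norm_num
    ring
  rw [setIntegral_congr_fun measurableSet_Ioi hsubst, integral_const_mul,
    integral_rpow_mul_exp_neg_mul_Ioi hα hk, one_div, inv_rpow hk.le]
  field_simp

lemma integral_Ioo_exp_int_mul_I (n : ℤ) :
    ∫ θ in Set.Ioo (-π) π, cexp (n * θ * I) = if n = 0 then ((2 * π : ℝ) : ℂ) else 0 := by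
  split_ifs with hn
  · simp [hn, Real.volume_real_Ioo_of_le (by linarith [pi_pos] : -π ≤ π), two_mul]
  · rw [← integral_Ioc_eq_integral_Ioo, ← intervalIntegral.integral_of_le (by linarith [pi_pos])]
    have hc : (n : ℂ) * I ≠ 0 := mul_ne_zero (by exact_mod_cast hn) I_ne_zero
    simp_rw [mul_right_comm _ _ I]
    rw [integral_exp_mul_complex hc, div_eq_zero_iff, sub_eq_zero]
    left
    rw [show (n : ℂ) * I * (π : ℝ) = n * I * (-π : ℝ) + n * (2 * π * I) by push_cast; ring,
      Complex.exp_add, Complex.exp_int_mul_two_pi_mul_I, mul_one]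

lemma setIntegral_ball_eq_polarCoord {E : Type*} [NormedAddCommGroup E] [NormedSpace ℝ E]
    (R : ℝ) (f : ℂ → E) :
    ∫ w in Metric.ball 0 R, f w =
      ∫ p in Set.Ioo 0 R ×ˢ Set.Ioo (-π) π, p.1 • f (Complex.polarCoord.symm p) := by
  have hind : ∀ p ∈ polarCoord.target, p.1 • (Metric.ball 0 R).indicator f
      (Complex.polarCoord.symm p) =
        (Set.Ioo 0 R ×ˢ Set.Ioo (-π) π).indicator
          (fun p => p.1 • f (Complex.polarCoord.symm p)) p := by
    rintro ⟨r, θ⟩ ⟨hr, hθ⟩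
    have hr : 0 < r := hr
    simp only [Set.indicator, Metric.mem_ball, dist_zero_right, Complex.norm_polarCoord_symm,
      abs_of_pos hr, Set.mem_prod, Set.mem_Ioo, hr, true_and, hθ, and_true]
    split_ifs <;> simp
  rw [← integral_indicator measurableSet_ball, ← Complex.integral_comp_polarCoord_symm,
    setIntegral_congr_fun polarCoord.open_target.measurableSet hind,
    setIntegral_indicator (measurableSet_Ioo.prod measurableSet_Ioo),
    Set.inter_eq_self_of_subset_right]
  rw [polarCoord_target]
  exact Set.prod_mono Set.Ioo_subset_Ioi_self subset_rfl

lemma integral_mAlpha_eq_polarCoord {E : Type*} [NormedAddCommGroup E] [NormedSpace ℝ E]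
    {α : ℝ} (hα : 0 < α) (f : ℂ → E) :
    ∫ w, f w ∂mAlpha α = π⁻¹ • ∫ p in Set.Ioo 0 1 ×ˢ Set.Ioo (-π) π,
      (p.1 * ((Real.Gamma α)⁻¹ * (-2 * Real.log p.1) ^ (α - 1))) •
        f (Complex.polarCoord.symm p) := by
  have hmeas : Measurable fun w : ℂ =>
      ((Real.Gamma α)⁻¹ * Real.log (1 / ‖w‖ ^ 2) ^ (α - 1)).toNNReal := by
    fun_prop
  refine (integral_withDensity_eq_integral_smul hmeas f).trans ?_
  rw [normAreaDisc, integral_smul_measure,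
    ENNReal.toReal_inv, ENNReal.toReal_ofReal pi_pos.le, setIntegral_ball_eq_polarCoord]
  congr 1
  refine setIntegral_congr_fun (measurableSet_Ioo.prod measurableSet_Ioo)
    fun p ⟨⟨hr0, hr1⟩, _⟩ => ?_
  have hlog : Real.log (1 / ‖Complex.polarCoord.symm p‖ ^ 2) = -2 * Real.log p.1 := by
    rw [Complex.norm_polarCoord_symm, abs_of_pos hr0, one_div, Real.log_inv, Real.log_pow]
    push_cast; ring
  have hdens : 0 ≤ (Real.Gamma α)⁻¹ * (-2 * Real.log p.1) ^ (α - 1) :=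
    mul_nonneg (inv_nonneg.mpr (Real.Gamma_pos_of_pos hα).le)
      (Real.rpow_nonneg (by linarith [Real.log_neg hr0 hr1]) _)
  rw [hlog, NNReal.smul_def, Real.coe_toNNReal _ hdens, smul_smul, mul_comm]

lemma polarCoord_symm_pow_mul_conj_pow (r θ : ℝ) (j k : ℕ) :
    Complex.polarCoord.symm (r, θ) ^ j * conj (Complex.polarCoord.symm (r, θ)) ^ k =
      ((r ^ (j + k) : ℝ) : ℂ) * cexp (((j : ℤ) - k : ℤ) * θ * I) := by
  have hw : Complex.polarCoord.symm (r, θ) = r * cexp (θ * I) := by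
    rw [Complex.polarCoord_symm_apply, Complex.exp_mul_I]; push_cast; ring
  have hconj : conj (cexp (θ * I)) = (cexp (θ * I))⁻¹ := by
    rw [← Complex.exp_conj, map_mul, Complex.conj_ofReal, Complex.conj_I, mul_neg, Complex.exp_neg]
  rw [hw, map_mul, Complex.conj_ofReal, hconj, mul_pow, mul_pow, inv_pow, ← Complex.exp_nat_mul,
    ← Complex.exp_nat_mul, ← Complex.exp_neg,
    show (((j : ℤ) - k : ℤ) : ℂ) * θ * I = j * (θ * I) + -(k * (θ * I)) by push_cast; ring,
    Complex.exp_add]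
  push_cast
  ring

lemma integral_pow_mul_conj_pow_mAlpha {α : ℝ} (hα : 0 < α) (j k : ℕ) :
    ∫ w, w ^ j * conj w ^ k ∂mAlpha α =
      if j = k then ((((j : ℝ) + 1) ^ (-α) : ℝ) : ℂ) else 0 := by
  set T := Set.Ioo (0 : ℝ) 1 ×ˢ Set.Ioo (-π) π
  have hsep : ∀ p ∈ T, (p.1 * ((Real.Gamma α)⁻¹ * (-2 * Real.log p.1) ^ (α - 1))) •
      (Complex.polarCoord.symm p ^ j * conj (Complex.polarCoord.symm p) ^ k) =
        (((Real.Gamma α)⁻¹ * (p.1 ^ (j + k + 1) * (-2 * Real.log p.1) ^ (α - 1)) : ℝ) : ℂ) *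
          cexp (((j : ℤ) - k : ℤ) * p.2 * I) := by
    rintro ⟨r, θ⟩ -
    rw [polarCoord_symm_pow_mul_conj_pow, Complex.real_smul, ← mul_assoc, ← Complex.ofReal_mul]
    congr 2
    ring
  rw [integral_mAlpha_eq_polarCoord hα,
    setIntegral_congr_fun (measurableSet_Ioo.prod measurableSet_Ioo) hsep,
    Measure.volume_eq_prod, ← Measure.prod_restrict, integral_prod_mul
      (fun r : ℝ => (((Real.Gamma α)⁻¹ * (r ^ (j + k + 1) * (-2 * Real.log r) ^ (α - 1)) : ℝ) : ℂ))
      (fun θ : ℝ => cexp (((j : ℤ) - k : ℤ) * θ * I)), integral_Ioo_exp_int_mul_I]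
  simp only [sub_eq_zero, Int.natCast_inj]
  split_ifs with hjk
  · subst hjk
    rw [integral_complex_ofReal, integral_const_mul, ← two_mul,
      integral_Ioo_pow_mul_neg_two_log_rpow hα,
      Complex.real_smul, ← Complex.ofReal_mul, ← Complex.ofReal_mul, Complex.ofReal_inj,
      Real.rpow_neg (by positivity)]
    have := (Real.Gamma_pos_of_pos hα).ne'
    field_simp
  · simp

lemma isProbabilityMeasure_mAlpha {α : ℝ} (hα : 0 < α) : IsProbabilityMeasure (mAlpha α) := by
  -- the zeroth moment is the total mass; an infinite mass would have junk real value `0`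
  have h := integral_pow_mul_conj_pow_mAlpha hα 0 0
  simp only [pow_zero, mul_one, if_true, CharP.cast_eq_zero, zero_add, Real.one_rpow,
    Complex.ofReal_one, integral_const] at h
  rw [Complex.real_smul, mul_one, Complex.ofReal_eq_one, measureReal_def,
    ENNReal.toReal_eq_one_iff] at h
  exact ⟨h⟩

lemma ae_mem_ball_mAlpha (α : ℝ) : ∀ᵐ w ∂mAlpha α, w ∈ Metric.ball (0 : ℂ) 1 :=
  (withDensity_absolutelyContinuous _ _).ae_le
    (Measure.ae_smul_measure (ae_restrict_mem measurableSet_ball) _)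

lemma integrable_pow_mul_conj_pow_mAlpha {α : ℝ} (hα : 0 < α) (j k : ℕ) :
    Integrable (fun w : ℂ => w ^ j * conj w ^ k) (mAlpha α) := by
  have := isProbabilityMeasure_mAlpha hα
  refine Integrable.of_bound (by fun_prop) 1 ?_
  filter_upwards [ae_mem_ball_mAlpha α] with w hw
  have hw : ‖w‖ ≤ 1 := (mem_ball_zero_iff.mp hw).le
  simpa using mul_le_one₀ (pow_le_one₀ (norm_nonneg w) hw) (by positivity)
    (pow_le_one₀ (norm_nonneg w) hw)

section InfinitePi

variable {ι 𝕜 : Type*} [RCLike 𝕜] {X : ι → Type*} [∀ i, MeasurableSpace (X i)]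
  {μ : (i : ι) → Measure (X i)} [∀ i, IsProbabilityMeasure (μ i)] {g : (i : ι) → X i → 𝕜}

lemma integrable_finset_prod_infinitePi (S : Finset ι) (hg : ∀ i, Integrable (g i) (μ i)) :
    Integrable (fun x => ∏ i ∈ S, g i (x i)) (Measure.infinitePi μ) := by
  have hF : Integrable (fun y : (Π i : S, X i) => ∏ i : S, g i (y i))
      (Measure.pi fun i : S => μ i) :=
    Integrable.fintype_prod_dep fun i => hg i
  rw [← Measure.infinitePi_map_restrict] at hF
  exact (hF.comp_measurable (Finset.measurable_restrict S)).congr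
    (ae_of_all _ fun x => Finset.prod_coe_sort S fun i => g i (x i))

lemma integral_finset_prod_infinitePi (S : Finset ι) (hg : ∀ i, AEStronglyMeasurable (g i) (μ i)) :
    ∫ x, ∏ i ∈ S, g i (x i) ∂Measure.infinitePi μ = ∏ i ∈ S, ∫ w, g i w ∂μ i := by
  have h := integral_restrict_infinitePi (μ := μ) (s := S)
    (f := fun y : (Π i : S, X i) => ∏ i : S, g i (y i))
    (Finset.aestronglyMeasurable_fun_prod Finset.univ fun i _ =>
      (hg i).comp_quasiMeasurePreserving (Measure.quasiMeasurePreserving_eval _ i))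
  rw [integral_fintype_prod_eq_prod] at h
  simp_rw [← Finset.prod_coe_sort S]
  exact h

end InfinitePi

lemma integral_norm_sq_sum_of_orthogonal {ι X 𝕜 : Type*} [RCLike 𝕜] [MeasurableSpace X]
    [DecidableEq ι] {μ : Measure X} (s : Finset ι) (e : ι → X → 𝕜) (c : ι → ℝ) (a : ι → 𝕜)
    (hint : ∀ m ∈ s, ∀ n ∈ s, Integrable (fun x => e m x * conj (e n x)) μ)
    (horth : ∀ m ∈ s, ∀ n ∈ s, ∫ x, e m x * conj (e n x) ∂μ = if m = n then (c n : 𝕜) else 0) :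
    ∫ x, ‖∑ n ∈ s, a n * e n x‖ ^ 2 ∂μ = ∑ n ∈ s, ‖a n‖ ^ 2 * c n := by
  have hexpand : ∀ x, ((‖∑ n ∈ s, a n * e n x‖ ^ 2 : ℝ) : 𝕜) =
      ∑ m ∈ s, ∑ n ∈ s, a m * conj (a n) * (e m x * conj (e n x)) := fun x => by
    rw [RCLike.ofReal_pow, ← RCLike.mul_conj, map_sum, Finset.sum_mul_sum]
    simp only [map_mul]
    exact Finset.sum_congr rfl fun m _ => Finset.sum_congr rfl fun n _ => by ring
  apply RCLike.ofReal_injective (K := 𝕜)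
  rw [← integral_ofReal, integral_congr_ae (ae_of_all _ hexpand),
    integral_finsetSum _ fun m hm =>
      integrable_finsetSum _ fun n hn => (hint m hm n hn).const_mul _]
  push_cast
  refine Finset.sum_congr rfl fun m hm => ?_
  rw [integral_finsetSum _ fun n hn => (hint m hm n hn).const_mul _]
  simp_rw [integral_const_mul]
  rw [Finset.sum_congr rfl fun n hn => by rw [horth m hm n hn]]
  simp_rw [mul_ite, mul_zero]
  rw [Finset.sum_ite_eq, if_pos hm, RCLike.mul_conj]

lemma prod_primeFactors_eq_prod_primes {M : Type*} [CommMonoid M] {n : ℕ} {S : Finset Nat.Primes}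
    (hS : ∀ p : Nat.Primes, (p : ℕ) ∈ n.primeFactors → p ∈ S) (g : ℕ → M)
    (hg : ∀ p : Nat.Primes, (p : ℕ) ∉ n.primeFactors → g p = 1) :
    ∏ q ∈ n.primeFactors, g q = ∏ p ∈ S, g p := by
  rw [← Finset.prod_image (s := S) (g := ((↑) : Nat.Primes → ℕ)) fun p _ q _ h => Subtype.ext h]
  refine Finset.prod_subset (fun q hq => ?_) fun q hqS hq => ?_
  · exact Finset.mem_image_of_mem _ (hS ⟨q, Nat.prime_of_mem_primeFactors hq⟩ hq)
  · obtain ⟨p, -, rfl⟩ := Finset.mem_image.mp hqS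
    exact hg p hq

lemma primeExt_eq_prod {n : ℕ} {S : Finset Nat.Primes}
    (hS : ∀ p : Nat.Primes, (p : ℕ) ∈ n.primeFactors → p ∈ S) (z : Nat.Primes → ℂ) :
    primeExt z n = ∏ p ∈ S, z p ^ n.factorization p := by
  rw [primeExt, Finsupp.prod, Nat.support_factorization, prod_primeFactors_eq_prod_primes hS]
  · exact Finset.prod_congr rfl fun p _ => by rw [dif_pos p.2]; rfl
  · intro p hp
    rw [Finsupp.notMem_support_iff.mp hp, pow_zero]

lemma numDiv_eq_prod {n : ℕ} (hn : n ≠ 0) {S : Finset Nat.Primes}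
    (hS : ∀ p : Nat.Primes, (p : ℕ) ∈ n.primeFactors → p ∈ S) :
    numDiv n = ∏ p ∈ S, (n.factorization p + 1) := by
  rw [numDiv, Nat.card_divisors hn, prod_primeFactors_eq_prod_primes hS]
  intro p hp
  rw [Finsupp.notMem_support_iff.mp hp, zero_add]

lemma exists_factorization_ne {m n : ℕ} (hm : m ≠ 0) (hn : n ≠ 0) (hmn : m ≠ n)
    {S : Finset Nat.Primes} (hmS : ∀ p : Nat.Primes, (p : ℕ) ∈ m.primeFactors → p ∈ S)
    (hnS : ∀ p : Nat.Primes, (p : ℕ) ∈ n.primeFactors → p ∈ S) :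
    ∃ p ∈ S, m.factorization p ≠ n.factorization p := by
  by_contra! h
  refine hmn (Nat.eq_of_factorization_eq hm hn fun q => ?_)
  by_cases hq : q ∈ m.primeFactors ∨ q ∈ n.primeFactors
  · have hqp : q.Prime := hq.elim Nat.prime_of_mem_primeFactors Nat.prime_of_mem_primeFactors
    exact h ⟨q, hqp⟩ (hq.elim (hmS ⟨q, hqp⟩) (hnS ⟨q, hqp⟩))
  · push Not at hq
    rw [Finsupp.notMem_support_iff.mp hq.1, Finsupp.notMem_support_iff.mp hq.2]

lemma exists_finset_primes_of_finset (T : Finset ℕ) :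
    ∃ S : Finset Nat.Primes, ∀ p : Nat.Primes, (p : ℕ) ∈ T → p ∈ S :=
  ⟨T.preimage (↑) Nat.Primes.coe_nat_injective.injOn, fun _ hp => Finset.mem_preimage.mpr hp⟩

lemma primeExt_mul_conj_primeExt_eq_prod {m n : ℕ} {S : Finset Nat.Primes}
    (hS : ∀ p : Nat.Primes, (p : ℕ) ∈ m.primeFactors ∪ n.primeFactors → p ∈ S)
    (z : Nat.Primes → ℂ) :
    primeExt z m * conj (primeExt z n) =
      ∏ p ∈ S, (z p ^ m.factorization p * conj (z p) ^ n.factorization p) := by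
  rw [primeExt_eq_prod fun p hp => hS p (Finset.mem_union_left _ hp),
    primeExt_eq_prod fun p hp => hS p (Finset.mem_union_right _ hp), map_prod,
    ← Finset.prod_mul_distrib]
  simp only [map_pow]

lemma integrable_primeExt_mul_conj_primeExt {α : ℝ} (hα : 0 < α) (m n : ℕ) :
    Integrable (fun z => primeExt z m * conj (primeExt z n))
      (Measure.infinitePi fun _ : Nat.Primes => mAlpha α) := by
  have := isProbabilityMeasure_mAlpha hα
  obtain ⟨S, hS⟩ := exists_finset_primes_of_finset (m.primeFactors ∪ n.primeFactors)
  simp_rw [primeExt_mul_conj_primeExt_eq_prod hS]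
  exact integrable_finset_prod_infinitePi S fun p => integrable_pow_mul_conj_pow_mAlpha hα _ _

lemma integral_primeExt_mul_conj_primeExt {α : ℝ} (hα : 0 < α) {m n : ℕ} (hm : m ≠ 0)
    (hn : n ≠ 0) :
    ∫ z, primeExt z m * conj (primeExt z n) ∂Measure.infinitePi (fun _ => mAlpha α) =
      if m = n then (((numDiv n : ℝ) ^ (-α) : ℝ) : ℂ) else 0 := by
  have := isProbabilityMeasure_mAlpha hα
  obtain ⟨S, hS⟩ := exists_finset_primes_of_finset (m.primeFactors ∪ n.primeFactors)
  have hmS : ∀ p : Nat.Primes, (p : ℕ) ∈ m.primeFactors → p ∈ S :=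
    fun p hp => hS p (Finset.mem_union_left _ hp)
  have hnS : ∀ p : Nat.Primes, (p : ℕ) ∈ n.primeFactors → p ∈ S :=
    fun p hp => hS p (Finset.mem_union_right _ hp)
  simp_rw [primeExt_mul_conj_primeExt_eq_prod hS]
  refine (integral_finset_prod_infinitePi S (μ := fun _ : Nat.Primes => mAlpha α)
    (g := fun p (w : ℂ) => w ^ m.factorization p * conj w ^ n.factorization p)
    fun p => by fun_prop).trans ?_
  simp_rw [integral_pow_mul_conj_pow_mAlpha hα]
  split_ifs with hmn
  · subst hmn
    simp only [if_true]
    rw [numDiv_eq_prod hm hmS, ← Complex.ofReal_prod, Real.finsetProd_rpow _ _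
      (fun p _ => by positivity)]
    push_cast
    rfl
  · obtain ⟨p, hpS, hp⟩ := exists_factorization_ne hm hn hmn hmS hnS
    exact Finset.prod_eq_zero hpS (if_neg hp)

theorem statement5_general (α : ℝ) (hα : 0 < α) (να : Measure (Nat.Primes → ℂ))
    (hprod : ∀ (S : Finset Nat.Primes) (B : Nat.Primes → Set ℂ),
      (∀ p, MeasurableSet (B p)) →
      να {z | ∀ p ∈ S, z p ∈ B p} = ∏ p ∈ S, mAlpha α (B p))
    (a : ℕ → ℂ) (N : ℕ) :
    ∫ z, ‖∑ n ∈ Finset.Icc 1 N, a n * primeExt z n‖ ^ 2 ∂να =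
      ∑ n ∈ Finset.Icc 1 N, ‖a n‖ ^ 2 / (numDiv n : ℝ) ^ α := by
  have := isProbabilityMeasure_mAlpha hα
  obtain rfl : να = Measure.infinitePi fun _ => mAlpha α := Measure.eq_infinitePi _ hprod
  have hpos : ∀ n ∈ Finset.Icc 1 N, n ≠ 0 :=
    fun n hn => Nat.pos_iff_ne_zero.mp (Finset.mem_Icc.mp hn).1
  rw [integral_norm_sq_sum_of_orthogonal _ (fun n z => primeExt z n)
    (fun n => (numDiv n : ℝ) ^ (-α)) a (fun m _ n _ => integrable_primeExt_mul_conj_primeExt hα m n)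
    fun m hm n hn => integral_primeExt_mul_conj_primeExt hα (hpos m hm) (hpos n hn)]
  refine Finset.sum_congr rfl fun n _ => ?_
  rw [Real.rpow_neg (Nat.cast_nonneg _), div_eq_mul_inv]

/-- if `ν_α` is the product measure `⊗_p m_α` on the infinite polydisc
(characterized by its values on cylinder sets), then for every finitely supported
coefficient sequence `∫ |∑ a_n z(n)|² dν_α(z) = ∑ |a_n|²/d(n)^α`. -/
theorem statement5 (α : ℝ) (hα : 0 < α) (να : Measure (Nat.Primes → ℂ))
    [IsProbabilityMeasure να]
    (hprod : ∀ (S : Finset Nat.Primes) (B : Nat.Primes → Set ℂ),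
      (∀ p, MeasurableSet (B p)) →
      να {z | ∀ p ∈ S, z p ∈ B p} = ∏ p ∈ S, mAlpha α (B p))
    (a : ℕ → ℂ) (N : ℕ) (ha : ∀ n, N < n → a n = 0) :
    ∫ z, ‖∑ n ∈ Finset.Icc 1 N, a n * primeExt z n‖ ^ 2 ∂να =
      ∑ n ∈ Finset.Icc 1 N, ‖a n‖ ^ 2 / (numDiv n : ℝ) ^ α :=
  statement5_general α hα να hprod a N
end
end

section
/- Let (X, μ) be a probability space and let (e_n)_{n≥1} be an orthonormal sequence in L²(X, μ). If (c_n)_{n≥1} is a sequence of complex numbers with Σ_{n=1}^∞ |c_n|² (log n)² < ∞, then the partial sums Σ_{n=1}^N c_n e_n(x) converge as N → ∞ for μ-almost every x ∈ X. -/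
/-!
Split the partial sums `S_N = ∑_{n<N} c_n e_n` at the indices `2^k` and write
`b_k = ∑_{2^k ≤ n < 2^(k+1)} |c_n|²`. Since `log n ≥ k log 2` on the `k`-th block, the
hypothesis gives `∑ (k+1)² b_k < ∞`.

Along `N = 2^k`: by orthonormality `∫ (k+1)² |S_{2^(k+1)} - S_{2^k}|² = (k+1)² b_k`, so
`∑ (k+1)² |S_{2^(k+1)} - S_{2^k}|² < ∞` a.e., and then `∑ |S_{2^(k+1)} - S_{2^k}| < ∞` by
AM-GM against `∑ 1/(k+1)² < ∞`.

Inside a block: writing `t < 2^K` in binary splits `[0, t)` into at most `K` dyadic intervals,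
at most one of each length `2^j`, so by Cauchy–Schwarz `|∑_{n<t} a_n|²` is at most `K` times
the square function `∑_j ∑_i |∑_{n ∈ I_{j,i}} a_n|²` over all dyadic intervals
`I_{j,i} ⊆ [0, 2^K)`. This bound is uniform in `t`, and by orthonormality the square function
of the `k`-th block has integral `(k+1) b_k`. Hence `(k+1)` times it is summable a.e., so the
oscillation `max_{2^k ≤ N < 2^(k+1)} |S_N - S_{2^k}|` tends to `0` a.e.
-/

open Complex Filter MeasureTheory Finset

def dyadicInterval (j i : ℕ) : Finset ℕ := Ico (i * 2 ^ j) ((i + 1) * 2 ^ j)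

lemma sum_sum_dyadicInterval {M : Type*} [AddCommMonoid M] (a : ℕ → M) (j m : ℕ) :
    ∑ i ∈ range m, ∑ n ∈ dyadicInterval j i, a n = ∑ n ∈ range (m * 2 ^ j), a n := by
  induction m with
  | zero => simp
  | succ m ih =>
    rw [sum_range_succ, ih, range_eq_Ico, range_eq_Ico, dyadicInterval,
      sum_Ico_consecutive _ (Nat.zero_le _) (Nat.mul_le_mul_right _ m.le_succ)]

lemma div_pow_succ_mul_pow_succ (t j : ℕ) :
    t / 2 ^ (j + 1) * 2 ^ (j + 1) = t / 2 ^ j / 2 * 2 * 2 ^ j := by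
  rw [pow_succ, ← Nat.div_div_eq_div_mul]; ring

/-- `t / 2 ^ j * 2 ^ j` is `t` with its `j` lowest binary digits cleared, so `[0, t)` telescopes
into the intervals between consecutive roundings. -/
lemma sum_range_eq_sum_Ico_div_mul_pow {G : Type*} [AddCommGroup G] (a : ℕ → G) {t K : ℕ}
    (ht : t < 2 ^ K) :
    ∑ n ∈ range t, a n =
      ∑ j ∈ range K,
        ∑ n ∈ Ico (t / 2 ^ (j + 1) * 2 ^ (j + 1)) (t / 2 ^ j * 2 ^ j), a n := by
  have hmono (j : ℕ) : t / 2 ^ (j + 1) * 2 ^ (j + 1) ≤ t / 2 ^ j * 2 ^ j := by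
    rw [div_pow_succ_mul_pow_succ]
    exact Nat.mul_le_mul_right _ (Nat.div_mul_le_self _ 2)
  simp_rw [sum_Ico_eq_sub _ (hmono _)]
  rw [sum_range_sub' (fun j => ∑ n ∈ range (t / 2 ^ j * 2 ^ j), a n)]
  simp [Nat.div_eq_of_lt ht]

section SquareFunction

variable {E : Type*} [SeminormedAddCommGroup E]

def dyadicSquareFunction (a : ℕ → E) (K : ℕ) : ℝ :=
  ∑ j ∈ range K, ∑ i ∈ range (2 ^ (K - j)), ‖∑ n ∈ dyadicInterval j i, a n‖ ^ 2

lemma dyadicSquareFunction_nonneg (a : ℕ → E) (K : ℕ) : 0 ≤ dyadicSquareFunction a K :=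
  sum_nonneg fun _ _ => sum_nonneg fun _ _ => sq_nonneg _

/-- The interval between the roundings of `t` at scales `2 ^ (j + 1)` and `2 ^ j` is empty or a
dyadic interval of length `2 ^ j`, according to the `j`-th binary digit of `t`. -/
lemma norm_sum_Ico_div_mul_pow_sq_le (a : ℕ → E) {t K : ℕ} (ht : t < 2 ^ K) (j : ℕ) :
    ‖∑ n ∈ Ico (t / 2 ^ (j + 1) * 2 ^ (j + 1)) (t / 2 ^ j * 2 ^ j), a n‖ ^ 2 ≤
      ∑ i ∈ range (2 ^ (K - j)), ‖∑ n ∈ dyadicInterval j i, a n‖ ^ 2 := by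
  set q := t / 2 ^ j
  have hqK : q < 2 ^ (K - j) := by
    rw [Nat.div_lt_iff_lt_mul (by positivity), ← pow_add]
    exact ht.trans_le (Nat.pow_le_pow_right two_pos (by omega))
  rw [div_pow_succ_mul_pow_succ]
  rcases Nat.mod_two_eq_zero_or_one q with h | h
  · rw [Nat.div_mul_cancel (Nat.dvd_of_mod_eq_zero h), Ico_self, sum_empty, norm_zero, sq,
      mul_zero]
    positivity
  · have hint : Ico (q / 2 * 2 * 2 ^ j) (q * 2 ^ j) = dyadicInterval j (q / 2 * 2) := by
      rw [dyadicInterval]; congr 2; omega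
    rw [hint]
    exact single_le_sum (f := fun i => ‖∑ n ∈ dyadicInterval j i, a n‖ ^ 2)
      (fun i _ => by positivity) (mem_range.mpr ((Nat.div_mul_le_self q 2).trans_lt hqK))

lemma norm_sum_range_sq_le_dyadicSquareFunction (a : ℕ → E) {t K : ℕ} (ht : t < 2 ^ K) :
    ‖∑ n ∈ range t, a n‖ ^ 2 ≤ K * dyadicSquareFunction a K := by
  rw [sum_range_eq_sum_Ico_div_mul_pow a ht]
  calc _ ≤ (∑ j ∈ range K,
          ‖∑ n ∈ Ico (t / 2 ^ (j + 1) * 2 ^ (j + 1)) (t / 2 ^ j * 2 ^ j), a n‖) ^ 2 := by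
        gcongr; exact norm_sum_le _ _
    _ ≤ K * ∑ j ∈ range K,
          ‖∑ n ∈ Ico (t / 2 ^ (j + 1) * 2 ^ (j + 1)) (t / 2 ^ j * 2 ^ j), a n‖ ^ 2 := by
        simpa using sq_sum_le_card_mul_sum_sq (s := range K)
    _ ≤ K * dyadicSquareFunction a K := by
        unfold dyadicSquareFunction
        gcongr with j
        exact norm_sum_Ico_div_mul_pow_sq_le a ht j

end SquareFunction

lemma summable_of_summable_succ_sq_mul_sq {y : ℕ → ℝ} (hy : ∀ k, 0 ≤ y k)
    (h : Summable fun k : ℕ => ((k : ℝ) + 1) ^ 2 * y k ^ 2) : Summable y := by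
  have hinv : Summable fun k : ℕ => 1 / ((k : ℝ) + 1) ^ 2 := by
    simpa using (summable_nat_add_iff 1).mpr (Real.summable_one_div_nat_pow.mpr one_lt_two)
  refine .of_nonneg_of_le hy (fun k => ?_) ((hinv.add h).div_const 2)
  have hk : (k : ℝ) + 1 ≠ 0 := by positivity
  calc y k = 2 * (1 / ((k : ℝ) + 1)) * (((k : ℝ) + 1) * y k) / 2 := by field_simp
    _ ≤ ((1 / ((k : ℝ) + 1)) ^ 2 + (((k : ℝ) + 1) * y k) ^ 2) / 2 := by
        gcongr; exact two_mul_le_add_sq _ _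
    _ = _ := by rw [div_pow, one_pow, mul_pow]

lemma summable_sum_Ico_two_pow {f : ℕ → ℝ} (hf0 : ∀ n, 0 ≤ f n) (hf : Summable f) :
    Summable fun k => ∑ n ∈ Ico (2 ^ k) (2 ^ (k + 1)), f n := by
  refine summable_of_sum_range_le (c := ∑' n, f n) (fun k => sum_nonneg fun n _ => hf0 n)
    fun K => ?_
  simp_rw [sum_Ico_eq_sub _ (Nat.pow_le_pow_right two_pos (Nat.le_succ _))]
  rw [sum_range_sub (fun k => ∑ n ∈ range (2 ^ k), f n)]
  linarith [hf.sum_le_tsum (range (2 ^ K)) fun n _ => hf0 n,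
    sum_nonneg fun n (_ : n ∈ range (2 ^ 0)) => hf0 n]

lemma succ_sq_le_mul_log_sq {k n : ℕ} (hk : 1 ≤ k) (hn : 2 ^ k ≤ n) :
    ((k : ℝ) + 1) ^ 2 ≤ (2 / Real.log 2) ^ 2 * Real.log n ^ 2 := by
  have hlog2 := Real.log_pos one_lt_two
  have hlog : (k : ℝ) * Real.log 2 ≤ Real.log n := by
    rw [← Real.log_pow]
    exact Real.log_le_log (by positivity) (by exact_mod_cast hn)
  have hk' : (1 : ℝ) ≤ k := by exact_mod_cast hk
  have hle : (k : ℝ) + 1 ≤ 2 / Real.log 2 * Real.log n := by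
    rw [div_mul_eq_mul_div, le_div_iff₀ hlog2]
    nlinarith
  rw [← mul_pow]
  exact pow_le_pow_left₀ (by positivity) hle 2

lemma summable_succ_sq_mul_sum_Ico_two_pow {g : ℕ → ℝ} (hg0 : ∀ n, 0 ≤ g n)
    (hg : Summable fun n : ℕ => g n * Real.log n ^ 2) :
    Summable fun k : ℕ => ((k : ℝ) + 1) ^ 2 * ∑ n ∈ Ico (2 ^ k) (2 ^ (k + 1)), g n := by
  have hblocks := summable_sum_Ico_two_pow (fun n => mul_nonneg (hg0 n) (sq_nonneg _)) hg
  refine (summable_nat_add_iff 1).mp <| .of_nonneg_of_le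
    (fun k => mul_nonneg (sq_nonneg _) (sum_nonneg fun n _ => hg0 n)) (fun k => ?_)
    (((summable_nat_add_iff 1).mpr hblocks).mul_left ((2 / Real.log 2) ^ 2))
  rw [mul_sum, mul_sum]
  refine sum_le_sum fun n hn => ?_
  calc ((↑(k + 1) : ℝ) + 1) ^ 2 * g n ≤ (2 / Real.log 2) ^ 2 * Real.log n ^ 2 * g n :=
        mul_le_mul_of_nonneg_right (succ_sq_le_mul_log_sq (by omega) (mem_Ico.mp hn).1) (hg0 n)
    _ = _ := by ring

lemma sum_range_indicator_Ici {M : Type*} [AddCommMonoid M] (f : ℕ → M) {m N : ℕ}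
    (h : m ≤ N) : ∑ n ∈ range N, (Set.Ici m).indicator f n = ∑ n ∈ Ico m N, f n := by
  rw [range_eq_Ico, ← sum_Ico_consecutive _ (Nat.zero_le m) h,
    sum_eq_zero fun n hn => Set.indicator_of_notMem (by simpa using (mem_Ico.mp hn).2) f,
    zero_add]
  exact sum_congr rfl fun n hn => Set.indicator_of_mem (mem_Ico.mp hn).1 f

lemma sum_range_norm_sq_indicator_Ici {E : Type*} [SeminormedAddCommGroup E] (f : ℕ → E)
    {m N : ℕ} (h : m ≤ N) :
    ∑ n ∈ range N, ‖(Set.Ici m).indicator f n‖ ^ 2 = ∑ n ∈ Ico m N, ‖f n‖ ^ 2 := by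
  rw [← sum_range_indicator_Ici _ h]
  exact sum_congr rfl fun n _ =>
    congrFun (Set.indicator_comp_of_zero (g := fun z : E => ‖z‖ ^ 2) (by simp)).symm n

lemma exists_tendsto_of_dyadic {E : Type*} [NormedAddCommGroup E] [CompleteSpace E]
    {S : ℕ → E} {r : ℕ → ℝ} (hS : Summable fun k => ‖S (2 ^ (k + 1)) - S (2 ^ k)‖)
    (hr : Tendsto r atTop (nhds 0))
    (hosc : ∀ k N, 2 ^ k ≤ N → N < 2 ^ (k + 1) → ‖S N - S (2 ^ k)‖ ^ 2 ≤ r k) :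
    ∃ L, Tendsto S atTop (nhds L) := by
  obtain ⟨L, hL⟩ := cauchySeq_tendsto_of_complete
    (cauchySeq_of_summable_dist (f := fun k => S (2 ^ k))
      (by simpa only [dist_eq_norm'] using hS))
  have hlog : Tendsto (Nat.log 2) atTop atTop :=
    tendsto_atTop_atTop_of_monotone (fun _ _ => Nat.log_mono_right)
      fun k => ⟨2 ^ k, (Nat.log_pow one_lt_two k).ge⟩
  have hbound : Tendsto (fun N => √(r (Nat.log 2 N)) + ‖S (2 ^ Nat.log 2 N) - L‖) atTop
      (nhds 0) := by
    simpa [Function.comp_def] using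
      (hr.sqrt.add (tendsto_iff_norm_sub_tendsto_zero.mp hL)).comp hlog
  refine ⟨L, tendsto_iff_norm_sub_tendsto_zero.mpr <|
    squeeze_zero' (Eventually.of_forall fun N => norm_nonneg _) ?_ hbound⟩
  filter_upwards [eventually_ne_atTop 0] with N hN
  calc ‖S N - L‖ ≤ ‖S N - S (2 ^ Nat.log 2 N)‖ + ‖S (2 ^ Nat.log 2 N) - L‖ :=
        norm_sub_le_norm_sub_add_norm_sub _ _ _
    _ ≤ √(r (Nat.log 2 N)) + ‖S (2 ^ Nat.log 2 N) - L‖ := by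
        gcongr
        simpa using Real.abs_le_sqrt (hosc _ N (Nat.pow_log_le_self 2 hN)
          (Nat.lt_pow_succ_log_self one_lt_two N))

section Orthonormal

variable {X : Type*} [MeasurableSpace X] {μ : Measure X}

lemma integral_norm_sum_sq_of_orthonormal {ι : Type*} [DecidableEq ι] {e : ι → X → ℂ}
    (he : ∀ n, MemLp (e n) 2 μ)
    (horth : ∀ n m, ∫ x, starRingEnd ℂ (e n x) * e m x ∂μ = if n = m then 1 else 0)
    (c : ι → ℂ) (s : Finset ι) :
    ∫ x, ‖∑ n ∈ s, c n * e n x‖ ^ 2 ∂μ = ∑ n ∈ s, ‖c n‖ ^ 2 := by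
  have hint (n m : ι) : Integrable (fun x => starRingEnd ℂ (e n x) * e m x) μ :=
    (he n).star.integrable_mul (he m)
  apply Complex.ofReal_injective
  calc ((∫ x, ‖∑ n ∈ s, c n * e n x‖ ^ 2 ∂μ : ℝ) : ℂ)
      = ∫ x, ∑ n ∈ s, ∑ m ∈ s,
          starRingEnd ℂ (c n) * c m * (starRingEnd ℂ (e n x) * e m x) ∂μ := by
        rw [← integral_complex_ofReal]
        congr with x
        push_cast
        rw [← Complex.conj_mul', map_sum, sum_mul_sum]
        refine sum_congr rfl fun n _ => sum_congr rfl fun m _ => ?_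
        rw [map_mul]
        ring
    _ = ∑ n ∈ s, ∑ m ∈ s, starRingEnd ℂ (c n) * c m * (if n = m then 1 else 0) := by
        rw [integral_finsetSum _ fun n _ => integrable_finsetSum _ fun m _ =>
          (hint n m).const_mul _]
        refine sum_congr rfl fun n _ => ?_
        rw [integral_finsetSum _ fun m _ => (hint n m).const_mul _]
        simp_rw [integral_const_mul, horth]
    _ = _ := by simp [Complex.conj_mul']

lemma integrable_norm_sum_sq {ι : Type*} {e : ι → X → ℂ} (he : ∀ n, MemLp (e n) 2 μ)
    (c : ι → ℂ) (s : Finset ι) :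
    Integrable (fun x => ‖∑ n ∈ s, c n * e n x‖ ^ 2) μ :=
  (memLp_finsetSum s fun n _ => (he n).const_mul (c n)).integrable_norm_pow two_ne_zero

lemma integrable_dyadicSquareFunction {e : ℕ → X → ℂ} (he : ∀ n, MemLp (e n) 2 μ)
    (c : ℕ → ℂ) (K : ℕ) :
    Integrable (fun x => dyadicSquareFunction (fun n => c n * e n x) K) μ :=
  integrable_finsetSum _ fun _ _ => integrable_finsetSum _ fun _ _ =>
    integrable_norm_sum_sq he c _

lemma integral_dyadicSquareFunction {e : ℕ → X → ℂ} (he : ∀ n, MemLp (e n) 2 μ)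
    (horth : ∀ n m, ∫ x, starRingEnd ℂ (e n x) * e m x ∂μ = if n = m then 1 else 0)
    (c : ℕ → ℂ) (K : ℕ) :
    ∫ x, dyadicSquareFunction (fun n => c n * e n x) K ∂μ =
      K * ∑ n ∈ range (2 ^ K), ‖c n‖ ^ 2 := by
  have hlevel : ∀ j ∈ range K, ∫ x, ∑ i ∈ range (2 ^ (K - j)),
      ‖∑ n ∈ dyadicInterval j i, c n * e n x‖ ^ 2 ∂μ =
        ∑ n ∈ range (2 ^ K), ‖c n‖ ^ 2 := by
    intro j hj
    rw [integral_finsetSum _ fun i _ => integrable_norm_sum_sq he c _]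
    simp_rw [integral_norm_sum_sq_of_orthonormal he horth]
    rw [sum_sum_dyadicInterval, ← pow_add, Nat.sub_add_cancel (mem_range.mp hj).le]
  unfold dyadicSquareFunction
  rw [integral_finsetSum _ fun j _ => integrable_finsetSum _ fun i _ =>
    integrable_norm_sum_sq he c _, sum_congr rfl hlevel, sum_const, card_range, nsmul_eq_mul]

lemma ae_summable_of_summable_integral {ι : Type*} [Countable ι] {f : ι → X → ℝ}
    (hf : ∀ i, Integrable (f i) μ) (hf0 : ∀ i x, 0 ≤ f i x)
    (hsum : Summable fun i => ∫ x, f i x ∂μ) : ∀ᵐ x ∂μ, Summable fun i => f i x := by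
  have hnorm (i : ι) : (fun x => ‖f i x‖) = f i :=
    funext fun x => Real.norm_of_nonneg (hf0 i x)
  have hLp : ∑' i, eLpNorm (f i) 1 μ ≠ ⊤ := by
    simp_rw [eLpNorm_one_eq_lintegral_enorm, ← ofReal_integral_norm_eq_lintegral_enorm (hf _),
      hnorm, ← ENNReal.ofReal_tsum_of_nonneg (fun i => integral_nonneg (hf0 i)) hsum]
    exact ENNReal.ofReal_ne_top
  filter_upwards [summable_norm_of_tsum_eLpNorm_ne_top le_rfl (fun i => (hf i).1) hLp]
    with x hx
  simpa only [Real.norm_of_nonneg (hf0 _ x)] using hx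

end Orthonormal

theorem statement8_general {X : Type*} [MeasurableSpace X] (μ : Measure X)
    (e : ℕ → X → ℂ) (he : ∀ n, MemLp (e n) 2 μ)
    (horth : ∀ n m : ℕ,
      (∫ x, (starRingEnd ℂ) (e n x) * e m x ∂μ) = if n = m then 1 else 0)
    (c : ℕ → ℂ) (hc : Summable fun n : ℕ => ‖c n‖ ^ 2 * Real.log n ^ 2) :
    ∀ᵐ x ∂μ, ∃ L : ℂ,
      Tendsto (fun N : ℕ => ∑ n ∈ Finset.range N, c n * e n x) atTop (nhds L) := by
  let a (k : ℕ) : ℕ → ℂ := (Set.Ici (2 ^ k)).indicator c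
  have hb := summable_succ_sq_mul_sum_Ico_two_pow (fun n => sq_nonneg ‖c n‖) hc
  have hblock : ∀ᵐ x ∂μ, Summable fun k : ℕ =>
      ((k : ℝ) + 1) ^ 2 * ‖∑ n ∈ Ico (2 ^ k) (2 ^ (k + 1)), c n * e n x‖ ^ 2 :=
    ae_summable_of_summable_integral (fun k => (integrable_norm_sum_sq he c _).const_mul _)
      (fun k x => by positivity)
      (by simpa only [integral_const_mul, integral_norm_sum_sq_of_orthonormal he horth] using hb)
  have hsquare : ∀ᵐ x ∂μ, Summable fun k : ℕ =>
      ((k : ℝ) + 1) * dyadicSquareFunction (fun n => a k n * e n x) (k + 1) := by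
    refine ae_summable_of_summable_integral
      (fun k => (integrable_dyadicSquareFunction he _ _).const_mul _)
      (fun k x => mul_nonneg (by positivity) (dyadicSquareFunction_nonneg _ _))
      (hb.congr fun k => ?_)
    rw [integral_const_mul, integral_dyadicSquareFunction he horth,
      sum_range_norm_sq_indicator_Ici _ (Nat.pow_le_pow_right two_pos k.le_succ)]
    push_cast
    ring
  filter_upwards [hblock, hsquare] with x hblock_x hsquare_x
  refine exists_tendsto_of_dyadic ?_ hsquare_x.tendsto_atTop_zero fun k N hkN hNk => ?_
  · refine summable_of_summable_succ_sq_mul_sq (fun k => norm_nonneg _)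
      (hblock_x.congr fun k => ?_)
    rw [← sum_Ico_eq_sub _ (Nat.pow_le_pow_right two_pos k.le_succ)]
  · rw [← sum_Ico_eq_sub _ hkN, ← sum_range_indicator_Ici _ hkN]
    simpa only [Set.indicator_mul_left, Nat.cast_succ] using
      norm_sum_range_sq_le_dyadicSquareFunction (fun n => a k n * e n x) hNk

/-- Rademacher–Menchov: if `(e_n)` is an orthonormal sequence in `L²(X, μ)`
of a probability space and `∑ |c_n|² (log n)² < ∞`, then `∑ c_n e_n(x)` converges
`μ`-almost everywhere. -/
theorem statement8 {X : Type*} [MeasurableSpace X] (μ : Measure X) [IsProbabilityMeasure μ]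
    (e : ℕ → X → ℂ) (he : ∀ n, MemLp (e n) 2 μ)
    (horth : ∀ n m : ℕ,
      (∫ x, (starRingEnd ℂ) (e n x) * e m x ∂μ) = if n = m then 1 else 0)
    (c : ℕ → ℂ) (hc : Summable fun n : ℕ => ‖c n‖ ^ 2 * Real.log n ^ 2) :
    ∀ᵐ x ∂μ, ∃ L : ℂ,
      Tendsto (fun N : ℕ => ∑ n ∈ Finset.range N, c n * e n x) atTop (nhds L) :=
  statement8_general μ e he horth c hc
end

section
/- There exists a constant C > 0 such that for every τ ∈ ℝ and every Dirichlet polynomial f, ∫_τ^{τ+1} |f(1/2 + it)| dt ≤ C · ‖f‖_𝒦. -/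
/-!
For `σ > 1/2` the Dirichlet series `G_j`, `H_j` of `g_j`, `h_j` converge absolutely and
`f = ∑ⱼ G_j H_j` on the line `re s = σ`, so by Cauchy–Schwarz the claim reduces to the local
mean-square bound `∫_τ^{τ+1} |G(σ+it)|² dt ≤ C ‖G‖²_{ℋ²}`, uniform in `σ ≥ 1/2`; the line
`σ = 1/2` is then reached by continuity, `f` being a polynomial.

The mean-square bound is proved for Dirichlet polynomials and passes to series by dominated
convergence. On `[τ, τ+1]` the Gaussian `e^{-(t-c)²}`, `c = τ + 1/2`, is at least `1/2`, and
integrating `|∑ bₙ n^{-s}|²` against it over all of `ℝ` produces the kernel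
`√π (mn)^{-σ} e^{-(log m - log n)²/4}`, whose row sums are bounded; Schur's test concludes.
-/

open Complex Filter MeasureTheory Finset ComplexConjugate Topology

lemma sq_rpow_neg_div_two {x : ℝ} (hx : 0 ≤ x) (k : ℝ) : (x ^ 2) ^ (-(k / 2)) = x ^ (-k) := by
  rw [← Real.rpow_natCast, ← Real.rpow_mul hx]
  congr 1
  push_cast
  ring

lemma rpow_neg_three_halves_le {x : ℝ} (hx : 0 < x) :
    (x + 1) ^ (-(3 / 2) : ℝ) ≤ 2 * (x ^ (-(1 / 2) : ℝ) - (x + 1) ^ (-(1 / 2) : ℝ)) := by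
  obtain ⟨s, hs, rfl⟩ : ∃ s, 0 < s ∧ s ^ 2 = x := ⟨√x, by positivity, Real.sq_sqrt hx.le⟩
  obtain ⟨t, ht, hts⟩ : ∃ t, 0 < t ∧ t ^ 2 = s ^ 2 + 1 :=
    ⟨√(s ^ 2 + 1), by positivity, Real.sq_sqrt (by positivity)⟩
  have hst : s < t := by nlinarith
  rw [← hts, sq_rpow_neg_div_two hs.le, sq_rpow_neg_div_two ht.le, sq_rpow_neg_div_two ht.le,
    Real.rpow_neg ht.le, Real.rpow_neg hs.le, Real.rpow_neg ht.le, Real.rpow_one, Real.rpow_one,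
    show (3 : ℝ) = (3 : ℕ) by norm_num, Real.rpow_natCast]
  rw [show 2 * (s⁻¹ - t⁻¹) = 2 / (s * t * (s + t)) by field_simp; nlinarith]
  rw [inv_eq_one_div, div_le_div_iff₀ (by positivity) (by positivity)]
  nlinarith [mul_pos hs ht]

lemma sum_Ioc_rpow_neg_three_halves_le {m : ℕ} (hm : 0 < m) (M : ℕ) :
    ∑ n ∈ Ioc m M, (n : ℝ) ^ (-(3 / 2) : ℝ) ≤ 2 * (m : ℝ) ^ (-(1 / 2) : ℝ) := by
  suffices telescope : ∀ M, m ≤ M → ∑ n ∈ Ioc m M, (n : ℝ) ^ (-(3 / 2) : ℝ) ≤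
      2 * ((m : ℝ) ^ (-(1 / 2) : ℝ) - (M : ℝ) ^ (-(1 / 2) : ℝ)) by
    rcases le_total m M with h | h
    · have : (0 : ℝ) ≤ (M : ℝ) ^ (-(1 / 2) : ℝ) := by positivity
      linarith [telescope M h]
    · rw [Ioc_eq_empty_of_le h, sum_empty]; positivity
  intro M hM
  induction M, hM using Nat.le_induction with
  | base => simp
  | succ M hmM ih =>
    rw [sum_Ioc_succ_top hmM]
    have := rpow_neg_three_halves_le (x := (M : ℝ)) (by exact_mod_cast hm.trans_le hmM)
    push_cast
    linarith

/-- Schur's test. -/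
lemma sum_sum_mul_mul_le_of_sum_le {ι : Type*} (S : Finset ι) (x : ι → ℝ) (K : ι → ι → ℝ)
    (hK : ∀ m n, 0 ≤ K m n) (hKsymm : ∀ m n, K m n = K n m) {R : ℝ}
    (hrow : ∀ m ∈ S, ∑ n ∈ S, K m n ≤ R) :
    ∑ m ∈ S, ∑ n ∈ S, x m * x n * K m n ≤ R * ∑ m ∈ S, x m ^ 2 := by
  have hrows : ∑ m ∈ S, ∑ n ∈ S, x m ^ 2 * K m n ≤ R * ∑ m ∈ S, x m ^ 2 := by
    rw [mul_sum]
    refine sum_le_sum fun m hm => ?_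
    rw [← mul_sum, mul_comm]
    exact mul_le_mul_of_nonneg_right (hrow m hm) (sq_nonneg _)
  have hcols : ∑ m ∈ S, ∑ n ∈ S, x n ^ 2 * K m n = ∑ m ∈ S, ∑ n ∈ S, x m ^ 2 * K m n := by
    rw [sum_comm]
    simp only [hKsymm]
  calc ∑ m ∈ S, ∑ n ∈ S, x m * x n * K m n
      ≤ ∑ m ∈ S, ∑ n ∈ S, (x m ^ 2 * K m n + x n ^ 2 * K m n) / 2 :=
        sum_le_sum fun m _ => sum_le_sum fun n _ => by
          nlinarith [hK m n, mul_nonneg (hK m n) (sq_nonneg (x m - x n))]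
    _ ≤ R * ∑ m ∈ S, x m ^ 2 := by
        simp only [← sum_div, sum_add_distrib, hcols]
        linarith

noncomputable def gaussKernel (σ : ℝ) (m n : ℕ) : ℝ :=
  Real.exp (-σ * (Real.log m + Real.log n) - (Real.log m - Real.log n) ^ 2 / 4)

lemma gaussKernel_nonneg (σ : ℝ) (m n : ℕ) : 0 ≤ gaussKernel σ m n := (Real.exp_pos _).le

lemma gaussKernel_comm (σ : ℝ) (m n : ℕ) : gaussKernel σ m n = gaussKernel σ n m := by
  unfold gaussKernel; ring_nf

lemma gaussKernel_le {σ : ℝ} (hσ : 1 / 2 ≤ σ) {m n : ℕ} (hm : 1 ≤ m) (hn : 1 ≤ n) :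
    gaussKernel σ m n ≤
      3 * Real.exp (-(Real.log m + Real.log n) / 2 - |Real.log m - Real.log n|) := by
  have hlogm := Real.log_nonneg (show (1 : ℝ) ≤ m by exact_mod_cast hm)
  have hlogn := Real.log_nonneg (show (1 : ℝ) ≤ n by exact_mod_cast hn)
  have hsq : -(Real.log m - Real.log n) ^ 2 / 4 ≤ 1 - |Real.log m - Real.log n| := by
    nlinarith [sq_abs (Real.log m - Real.log n), sq_nonneg (|Real.log m - Real.log n| - 2)]
  calc gaussKernel σ m n
      ≤ Real.exp (1 + (-(Real.log m + Real.log n) / 2 - |Real.log m - Real.log n|)) := by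
        unfold gaussKernel
        gcongr
        nlinarith
    _ ≤ 3 * Real.exp (-(Real.log m + Real.log n) / 2 - |Real.log m - Real.log n|) := by
        rw [Real.exp_add]
        gcongr
        exact Real.exp_one_lt_three.le

lemma gaussKernel_le_of_le {σ : ℝ} (hσ : 1 / 2 ≤ σ) {m n : ℕ} (hn : 1 ≤ n) (hnm : n ≤ m) :
    gaussKernel σ m n ≤ 3 / m := by
  have hm0 : (0 : ℝ) < m := by exact_mod_cast hn.trans hnm
  have hlog : Real.log n ≤ Real.log m :=
    Real.log_le_log (by exact_mod_cast hn) (by exact_mod_cast hnm)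
  calc gaussKernel σ m n
      ≤ 3 * Real.exp (-(Real.log m + Real.log n) / 2 - |Real.log m - Real.log n|) :=
        gaussKernel_le hσ (hn.trans hnm) hn
    _ ≤ 3 * Real.exp (-Real.log m) := by
        rw [abs_of_nonneg (by linarith)]
        gcongr
        linarith
    _ = 3 / m := by rw [Real.exp_neg, Real.exp_log hm0, div_eq_mul_inv]

lemma gaussKernel_le_of_ge {σ : ℝ} (hσ : 1 / 2 ≤ σ) {m n : ℕ} (hm : 1 ≤ m) (hmn : m ≤ n) :
    gaussKernel σ m n ≤ 3 * (m : ℝ) ^ (1 / 2 : ℝ) * (n : ℝ) ^ (-(3 / 2) : ℝ) := by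
  have hm0 : (0 : ℝ) < m := by exact_mod_cast hm
  have hn0 : (0 : ℝ) < n := by exact_mod_cast hm.trans hmn
  have hlog : Real.log m ≤ Real.log n := Real.log_le_log hm0 (by exact_mod_cast hmn)
  calc gaussKernel σ m n
      ≤ 3 * Real.exp (-(Real.log m + Real.log n) / 2 - |Real.log m - Real.log n|) :=
        gaussKernel_le hσ hm (hm.trans hmn)
    _ = 3 * (m : ℝ) ^ (1 / 2 : ℝ) * (n : ℝ) ^ (-(3 / 2) : ℝ) := by
        rw [abs_of_nonpos (by linarith), Real.rpow_def_of_pos hm0, Real.rpow_def_of_pos hn0,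
          mul_assoc, ← Real.exp_add]
        ring_nf

lemma sum_gaussKernel_le {σ : ℝ} (hσ : 1 / 2 ≤ σ) {m : ℕ} (hm : 1 ≤ m) (M : ℕ) :
    ∑ n ∈ Icc 1 M, gaussKernel σ m n ≤ 9 := by
  have hm0 : (0 : ℝ) < m := by exact_mod_cast hm
  have hsplit : ∑ n ∈ Icc 1 M, gaussKernel σ m n ≤
      ∑ n ∈ Icc 1 m, gaussKernel σ m n + ∑ n ∈ Ioc m M, gaussKernel σ m n := by
    rw [← sum_union (disjoint_left.mpr fun n h₁ h₂ => by simp at h₁ h₂; omega)]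
    exact sum_le_sum_of_subset_of_nonneg (fun n hn => by simp at hn ⊢; omega)
      fun _ _ _ => gaussKernel_nonneg _ _ _
  have hlow : ∑ n ∈ Icc 1 m, gaussKernel σ m n ≤ 3 := by
    calc ∑ n ∈ Icc 1 m, gaussKernel σ m n ≤ ∑ n ∈ Icc 1 m, 3 / (m : ℝ) :=
          sum_le_sum fun n hn => gaussKernel_le_of_le hσ (mem_Icc.mp hn).1 (mem_Icc.mp hn).2
      _ = 3 := by rw [sum_const, Nat.card_Icc, nsmul_eq_mul]; field_simp; simp
  have hhigh : ∑ n ∈ Ioc m M, gaussKernel σ m n ≤ 6 := by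
    calc ∑ n ∈ Ioc m M, gaussKernel σ m n
        ≤ ∑ n ∈ Ioc m M, 3 * (m : ℝ) ^ (1 / 2 : ℝ) * (n : ℝ) ^ (-(3 / 2) : ℝ) :=
          sum_le_sum fun n hn => gaussKernel_le_of_ge hσ hm (mem_Ioc.mp hn).1.le
      _ = 3 * (m : ℝ) ^ (1 / 2 : ℝ) * ∑ n ∈ Ioc m M, (n : ℝ) ^ (-(3 / 2) : ℝ) := by
          rw [mul_sum]
      _ ≤ 3 * (m : ℝ) ^ (1 / 2 : ℝ) * (2 * (m : ℝ) ^ (-(1 / 2) : ℝ)) := by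
          gcongr; exact sum_Ioc_rpow_neg_three_halves_le hm M
      _ = 6 := by
          rw [show 3 * (m : ℝ) ^ (1 / 2 : ℝ) * (2 * (m : ℝ) ^ (-(1 / 2) : ℝ))
            = 6 * ((m : ℝ) ^ (1 / 2 : ℝ) * (m : ℝ) ^ (-(1 / 2) : ℝ)) by ring,
            ← Real.rpow_add hm0]
          norm_num
  linarith

lemma gaussian_mul_cexp_eq (c ξ t : ℝ) :
    (Real.exp (-(t - c) ^ 2) : ℂ) * cexp (ξ * t * I) =
      cexp (-1 * (t : ℂ) ^ 2 + (2 * c + ξ * I) * t + -(c : ℂ) ^ 2) := by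
  rw [Complex.ofReal_exp, ← Complex.exp_add]
  push_cast
  ring_nf

lemma integrable_gaussian_mul_cexp (c ξ : ℝ) :
    Integrable fun t : ℝ => (Real.exp (-(t - c) ^ 2) : ℂ) * cexp (ξ * t * I) := by
  simp only [gaussian_mul_cexp_eq]
  exact integrable_cexp_quadratic' (by norm_num) _ _

lemma norm_integral_gaussian_mul_cexp (c ξ : ℝ) :
    ‖∫ t : ℝ, (Real.exp (-(t - c) ^ 2) : ℂ) * cexp (ξ * t * I)‖ =
      √Real.pi * Real.exp (-ξ ^ 2 / 4) := by
  have hexponent : -(c : ℂ) ^ 2 - (2 * c + ξ * I) ^ 2 / (4 * -1) =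
      ((-ξ ^ 2 / 4 : ℝ) : ℂ) + ((c * ξ : ℝ) : ℂ) * I := by
    push_cast
    linear_combination ((ξ : ℂ) ^ 2 / 4) * I_sq
  simp only [gaussian_mul_cexp_eq]
  rw [integral_cexp_quadratic (by norm_num), norm_mul, hexponent, Complex.norm_exp,
    Complex.add_re, Complex.ofReal_re, Complex.re_ofReal_mul, I_re, mul_zero, add_zero, neg_neg,
    div_one, ← Complex.ofReal_ofNat, Complex.norm_cpow_eq_rpow_re_of_pos Real.pi_pos,
    Real.sqrt_eq_rpow]
  norm_num

lemma natCast_cpow_eq_cexp {n : ℕ} (hn : n ≠ 0) (s : ℂ) : (n : ℂ) ^ s = cexp (Real.log n * s) := by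
  rw [Complex.cpow_def_of_ne_zero (by exact_mod_cast hn), Complex.natCast_log]

lemma term_mul_conj_term (b : ℕ → ℂ) (σ t : ℝ) {m n : ℕ} (hm : m ≠ 0) (hn : n ≠ 0) :
    LSeries.term b (σ + t * I) m * conj (LSeries.term b (σ + t * I) n) =
      b m * conj (b n) * (Real.exp (-σ * (Real.log m + Real.log n)) : ℂ) *
        cexp ((Real.log n - Real.log m) * t * I) := by
  rw [LSeries.term_of_ne_zero hm, LSeries.term_of_ne_zero hn, natCast_cpow_eq_cexp hm,
    natCast_cpow_eq_cexp hn, map_div₀, ← Complex.exp_conj, div_eq_mul_inv, div_eq_mul_inv,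
    ← Complex.exp_neg, ← Complex.exp_neg, Complex.ofReal_exp]
  have hexp : cexp (-(Real.log m * (σ + t * I))) * cexp (-conj (Real.log n * (σ + t * I))) =
      cexp (-σ * (Real.log m + Real.log n) : ℝ) * cexp ((Real.log n - Real.log m) * t * I) := by
    rw [← Complex.exp_add, ← Complex.exp_add]
    congr 1
    simp only [map_mul, map_add, Complex.conj_ofReal, Complex.conj_I]
    push_cast
    ring
  linear_combination b m * conj (b n) * hexp

lemma gaussian_mul_term_mul_conj_eq (b : ℕ → ℂ) (σ c t : ℝ) {m n : ℕ} (hm : m ≠ 0) (hn : n ≠ 0) :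
    (Real.exp (-(t - c) ^ 2) : ℂ) *
        (LSeries.term b (σ + t * I) m * conj (LSeries.term b (σ + t * I) n)) =
      b m * conj (b n) * (Real.exp (-σ * (Real.log m + Real.log n)) : ℂ) *
        ((Real.exp (-(t - c) ^ 2) : ℂ) * cexp ((Real.log n - Real.log m : ℝ) * t * I)) := by
  rw [term_mul_conj_term b σ t hm hn]
  push_cast
  ring

lemma integrable_gaussian_mul_term_mul_conj (b : ℕ → ℂ) (σ c : ℝ) {m n : ℕ} (hm : m ≠ 0)
    (hn : n ≠ 0) :
    Integrable fun t : ℝ => (Real.exp (-(t - c) ^ 2) : ℂ) *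
      (LSeries.term b (σ + t * I) m * conj (LSeries.term b (σ + t * I) n)) := by
  simp only [gaussian_mul_term_mul_conj_eq b σ c _ hm hn]
  exact (integrable_gaussian_mul_cexp c _).const_mul _

lemma norm_integral_gaussian_mul_term_mul_conj (b : ℕ → ℂ) (σ c : ℝ) {m n : ℕ} (hm : m ≠ 0)
    (hn : n ≠ 0) :
    ‖∫ t : ℝ, (Real.exp (-(t - c) ^ 2) : ℂ) *
        (LSeries.term b (σ + t * I) m * conj (LSeries.term b (σ + t * I) n))‖ =
      √Real.pi * (‖b m‖ * ‖b n‖ * gaussKernel σ m n) := by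
  simp only [gaussian_mul_term_mul_conj_eq b σ c _ hm hn]
  rw [integral_const_mul, norm_mul, norm_integral_gaussian_mul_cexp, norm_mul, norm_mul,
    Complex.norm_conj, Complex.norm_real, Real.norm_of_nonneg (Real.exp_pos _).le, gaussKernel,
    sub_eq_add_neg _ ((Real.log m - Real.log n) ^ 2 / 4), Real.exp_add]
  ring_nf

noncomputable def partialLSeries (b : ℕ → ℂ) (M : ℕ) (s : ℂ) : ℂ :=
  ∑ n ∈ Icc 1 M, LSeries.term b s n

lemma continuous_partialLSeries (b : ℕ → ℂ) (M : ℕ) (σ : ℝ) :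
    Continuous fun t : ℝ => partialLSeries b M (σ + t * I) := by
  refine continuous_finsetSum _ fun n hn => ?_
  have hn0 : n ≠ 0 := by simp at hn; omega
  simp only [LSeries.term_of_ne_zero hn0, natCast_cpow_eq_cexp hn0]
  exact continuous_const.div (by fun_prop) fun _ => Complex.exp_ne_zero _

lemma gaussian_mul_norm_sq_partialLSeries_eq (b : ℕ → ℂ) (M : ℕ) (σ c t : ℝ) :
    ((Real.exp (-(t - c) ^ 2) * ‖partialLSeries b M (σ + t * I)‖ ^ 2 : ℝ) : ℂ) =
      ∑ m ∈ Icc 1 M, ∑ n ∈ Icc 1 M, (Real.exp (-(t - c) ^ 2) : ℂ) *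
        (LSeries.term b (σ + t * I) m * conj (LSeries.term b (σ + t * I) n)) := by
  rw [Complex.ofReal_mul, Complex.ofReal_pow, ← Complex.mul_conj', partialLSeries, map_sum,
    sum_mul_sum, mul_sum]
  simp only [mul_sum]

lemma integrable_gaussian_mul_norm_sq_partialLSeries (b : ℕ → ℂ) (M : ℕ) (σ c : ℝ) :
    Integrable fun t : ℝ => Real.exp (-(t - c) ^ 2) * ‖partialLSeries b M (σ + t * I)‖ ^ 2 := by
  have hint := integrable_finsetSum _ fun m (hm : m ∈ Icc 1 M) =>
    integrable_finsetSum _ fun n (hn : n ∈ Icc 1 M) =>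
      integrable_gaussian_mul_term_mul_conj b σ c (m := m) (n := n)
        (by simp at hm; omega) (by simp at hn; omega)
  refine (hint.re).congr (Eventually.of_forall fun t => ?_)
  simp only [← gaussian_mul_norm_sq_partialLSeries_eq]
  exact Complex.ofReal_re _

lemma integral_gaussian_mul_norm_sq_partialLSeries_le {σ : ℝ} (hσ : 1 / 2 ≤ σ) (b : ℕ → ℂ)
    (M : ℕ) (c : ℝ) :
    ∫ t : ℝ, Real.exp (-(t - c) ^ 2) * ‖partialLSeries b M (σ + t * I)‖ ^ 2 ≤
      √Real.pi * 9 * ∑ n ∈ Icc 1 M, ‖b n‖ ^ 2 := by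
  have hmem : ∀ n ∈ Icc 1 M, n ≠ 0 := fun n hn => by simp at hn; omega
  calc ∫ t : ℝ, Real.exp (-(t - c) ^ 2) * ‖partialLSeries b M (σ + t * I)‖ ^ 2
      ≤ ‖∫ t : ℝ,
          ((Real.exp (-(t - c) ^ 2) * ‖partialLSeries b M (σ + t * I)‖ ^ 2 : ℝ) : ℂ)‖ := by
        rw [integral_complex_ofReal, Complex.norm_real, Real.norm_eq_abs]
        exact le_abs_self _
    _ ≤ ∑ m ∈ Icc 1 M, ∑ n ∈ Icc 1 M, √Real.pi * (‖b m‖ * ‖b n‖ * gaussKernel σ m n) := by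
        simp only [gaussian_mul_norm_sq_partialLSeries_eq]
        rw [integral_finsetSum _ fun m hm => integrable_finsetSum _ fun n hn =>
          integrable_gaussian_mul_term_mul_conj b σ c (hmem m hm) (hmem n hn)]
        refine (norm_sum_le _ _).trans (sum_le_sum fun m hm => ?_)
        rw [integral_finsetSum _ fun n hn =>
          integrable_gaussian_mul_term_mul_conj b σ c (hmem m hm) (hmem n hn)]
        refine (norm_sum_le _ _).trans (sum_le_sum fun n hn => ?_)
        rw [norm_integral_gaussian_mul_term_mul_conj b σ c (hmem m hm) (hmem n hn)]
    _ = √Real.pi * ∑ m ∈ Icc 1 M, ∑ n ∈ Icc 1 M, ‖b m‖ * ‖b n‖ * gaussKernel σ m n := by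
        simp only [mul_sum]
    _ ≤ √Real.pi * (9 * ∑ n ∈ Icc 1 M, ‖b n‖ ^ 2) := by
        gcongr
        exact sum_sum_mul_mul_le_of_sum_le _ _ _ (gaussKernel_nonneg σ) (gaussKernel_comm σ)
          fun m hm => sum_gaussKernel_le hσ (mem_Icc.mp hm).1 M
    _ = √Real.pi * 9 * ∑ n ∈ Icc 1 M, ‖b n‖ ^ 2 := by ring

lemma sqrt_pi_le_two : √Real.pi ≤ 2 :=
  Real.sqrt_le_iff.mpr ⟨by norm_num, by linarith [Real.pi_le_four]⟩

lemma one_le_two_mul_exp_neg_sq {x : ℝ} (hx : |x| ≤ 1 / 2) : 1 ≤ 2 * Real.exp (-x ^ 2) := by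
  have hx2 : x ^ 2 ≤ 1 / 4 := by nlinarith [sq_abs x, abs_nonneg x]
  linarith [Real.add_one_le_exp (-x ^ 2)]

theorem integral_norm_sq_partialLSeries_le {σ : ℝ} (hσ : 1 / 2 ≤ σ) (τ : ℝ) (b : ℕ → ℂ)
    (M : ℕ) :
    ∫ t in τ..τ + 1, ‖partialLSeries b M (σ + t * I)‖ ^ 2 ≤ 36 * ∑ n ∈ Icc 1 M, ‖b n‖ ^ 2 := by
  set c := τ + 1 / 2 with hc
  have hτ : τ ≤ τ + 1 := by linarith
  have hP := continuous_partialLSeries b M σ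
  have hweight : ∀ t ∈ Set.Icc τ (τ + 1), 1 ≤ 2 * Real.exp (-(t - c) ^ 2) := fun t ht =>
    one_le_two_mul_exp_neg_sq (abs_le.mpr ⟨by linarith [ht.1, hc], by linarith [ht.2, hc]⟩)
  calc ∫ t in τ..τ + 1, ‖partialLSeries b M (σ + t * I)‖ ^ 2
      ≤ ∫ t in τ..τ + 1,
          2 * (Real.exp (-(t - c) ^ 2) * ‖partialLSeries b M (σ + t * I)‖ ^ 2) := by
        refine intervalIntegral.integral_mono_on hτ
          (Continuous.intervalIntegrable (by fun_prop) _ _)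
          (Continuous.intervalIntegrable (by fun_prop) _ _) fun t ht => ?_
        nlinarith [hweight t ht, sq_nonneg ‖partialLSeries b M (σ + t * I)‖]
    _ ≤ 2 * ∫ t : ℝ, Real.exp (-(t - c) ^ 2) * ‖partialLSeries b M (σ + t * I)‖ ^ 2 := by
        rw [intervalIntegral.integral_const_mul, intervalIntegral.integral_of_le hτ]
        exact mul_le_mul_of_nonneg_left (setIntegral_le_integral
          (integrable_gaussian_mul_norm_sq_partialLSeries b M σ c)
          (Eventually.of_forall fun t => by positivity)) zero_le_two
    _ ≤ 2 * (√Real.pi * 9 * ∑ n ∈ Icc 1 M, ‖b n‖ ^ 2) := by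
        gcongr
        exact integral_gaussian_mul_norm_sq_partialLSeries_le hσ b M c
    _ ≤ 36 * ∑ n ∈ Icc 1 M, ‖b n‖ ^ 2 := by
        nlinarith [sqrt_pi_le_two, sum_nonneg fun n (_ : n ∈ Icc 1 M) => sq_nonneg ‖b n‖]

lemma partialLSeries_eq_sum_range (b : ℕ → ℂ) (M : ℕ) (s : ℂ) :
    partialLSeries b M s = ∑ n ∈ range (M + 1), LSeries.term b s n := by
  rw [show range (M + 1) = insert 0 (Icc 1 M) by ext n; simp; omega,
    sum_insert (by simp), LSeries.term_zero, zero_add, partialLSeries]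

lemma tendsto_partialLSeries {b : ℕ → ℂ} {s : ℂ} (hs : LSeriesSummable b s) :
    Tendsto (fun M => partialLSeries b M s) atTop (𝓝 (LSeries b s)) := by
  simp only [partialLSeries_eq_sum_range]
  exact hs.LSeriesHasSum.tendsto_sum_nat.comp (tendsto_add_atTop_nat 1)

lemma LSeriesSummable_of_summable_sq {b : ℕ → ℂ} (hb : Summable fun n => ‖b (n + 1)‖ ^ 2)
    {s : ℂ} (hs : 1 / 2 < s.re) : LSeriesSummable b s := by
  have hpow : Summable fun n : ℕ => ((n + 1 : ℕ) : ℝ) ^ (-(2 * s.re)) :=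
    (summable_nat_add_iff 1).mpr (Real.summable_nat_rpow.mpr (by linarith))
  refine (summable_nat_add_iff 1).mp (((hb.add hpow).div_const 2).of_norm_bounded fun n => ?_)
  have hn : (0 : ℝ) < (n + 1 : ℕ) := by positivity
  -- AM-GM: `‖bₙ‖ n^(-re s) ≤ (‖bₙ‖² + n^(-2 re s)) / 2`
  have hsq : (((n + 1 : ℕ) : ℝ) ^ (-s.re)) ^ 2 = ((n + 1 : ℕ) : ℝ) ^ (-(2 * s.re)) := by
    rw [← Real.rpow_natCast, ← Real.rpow_mul hn.le]; congr 1; push_cast; ring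
  rw [LSeries.norm_term_eq, if_neg (Nat.succ_ne_zero n), div_eq_mul_inv, ← Real.rpow_neg hn.le,
    ← hsq]
  nlinarith [sq_nonneg (‖b (n + 1)‖ - ((n + 1 : ℕ) : ℝ) ^ (-s.re))]

lemma continuous_LSeries_of_summable_sq {b : ℕ → ℂ} (hb : Summable fun n => ‖b (n + 1)‖ ^ 2)
    {σ : ℝ} (hσ : 1 / 2 < σ) : Continuous fun t : ℝ => LSeries b (σ + t * I) := by
  have habs : LSeries.abscissaOfAbsConv b ≤ (1 / 2 : ℝ) :=
    LSeries.abscissaOfAbsConv_le_of_forall_lt_LSeriesSummable fun y hy =>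
      LSeriesSummable_of_summable_sq hb (by simpa using hy)
  refine (LSeries_differentiableOn b).continuousOn.comp_continuous (by fun_prop) fun t => ?_
  simpa using habs.trans_lt (by exact_mod_cast hσ)

lemma norm_partialLSeries_le_of_re_le {b : ℕ → ℂ} {s s' : ℂ} (hs : LSeriesSummable b s)
    (h : s.re ≤ s'.re) (M : ℕ) : ‖partialLSeries b M s'‖ ≤ ∑' n, ‖LSeries.term b s n‖ :=
  (norm_sum_le _ _).trans <| (sum_le_sum fun n _ => LSeries.norm_term_le_of_re_le_re b h n).trans
    (hs.norm.sum_le_tsum _ fun _ _ => norm_nonneg _)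

lemma sum_Icc_norm_sq_le_tsum {b : ℕ → ℂ} (hb : Summable fun n => ‖b (n + 1)‖ ^ 2) (M : ℕ) :
    ∑ n ∈ Icc 1 M, ‖b n‖ ^ 2 ≤ ∑' n, ‖b (n + 1)‖ ^ 2 := by
  rw [← Finset.Ico_succ_right_eq_Icc, sum_Ico_eq_sum_range, Order.succ_eq_add_one,
    Nat.add_sub_cancel]
  simp only [add_comm 1]
  exact hb.sum_le_tsum _ fun _ _ => sq_nonneg _

theorem integral_norm_sq_LSeries_le {b : ℕ → ℂ} (hb : Summable fun n => ‖b (n + 1)‖ ^ 2)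
    {σ : ℝ} (hσ : 1 / 2 < σ) (τ : ℝ) :
    ∫ t in τ..τ + 1, ‖LSeries b (σ + t * I)‖ ^ 2 ≤ 36 * ∑' n, ‖b (n + 1)‖ ^ 2 := by
  have hsum : ∀ s : ℂ, s.re = σ → LSeriesSummable b s := fun s hs =>
    LSeriesSummable_of_summable_sq hb (hs ▸ hσ)
  have hre : ∀ t : ℝ, (σ : ℂ).re ≤ (σ + t * I).re := fun t => by simp
  set B := ∑' n, ‖LSeries.term b σ n‖
  have hlim : Tendsto (fun M => ∫ t in τ..τ + 1, ‖partialLSeries b M (σ + t * I)‖ ^ 2) atTop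
      (𝓝 (∫ t in τ..τ + 1, ‖LSeries b (σ + t * I)‖ ^ 2)) := by
    refine intervalIntegral.tendsto_integral_filter_of_dominated_convergence (fun _ => B ^ 2)
      (Eventually.of_forall fun M =>
        ((continuous_partialLSeries b M σ).norm.pow 2).aestronglyMeasurable)
      (Eventually.of_forall fun M => Eventually.of_forall fun t _ => ?_)
      intervalIntegrable_const (Eventually.of_forall fun t _ =>
        ((tendsto_partialLSeries (hsum _ (by simp))).norm).pow 2)
    rw [norm_pow, norm_norm]
    exact pow_le_pow_left₀ (norm_nonneg _)
      (norm_partialLSeries_le_of_re_le (hsum σ (by simp)) (hre t) M) 2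
  refine le_of_tendsto' hlim fun M => (integral_norm_sq_partialLSeries_le hσ.le τ b M).trans ?_
  gcongr
  exact sum_Icc_norm_sq_le_tsum hb M

lemma intervalIntegral_mul_le_sqrt_mul_sqrt {u v : ℝ → ℝ} {a b : ℝ} (hab : a ≤ b)
    (hu : Continuous u) (hv : Continuous v) (hu0 : ∀ t, 0 ≤ u t) (hv0 : ∀ t, 0 ≤ v t) :
    ∫ t in a..b, u t * v t ≤ √(∫ t in a..b, u t ^ 2) * √(∫ t in a..b, v t ^ 2) := by
  have hL2 : ∀ w : ℝ → ℝ, Continuous w →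
      MemLp w (ENNReal.ofReal 2) (volume.restrict (Set.Ioc a b)) := fun w hw => by
    rw [ENNReal.ofReal_ofNat, memLp_two_iff_integrable_sq hw.aestronglyMeasurable]
    exact (hw.pow 2).integrableOn_Ioc
  simp only [intervalIntegral.integral_of_le hab, Real.sqrt_eq_rpow, ← Real.rpow_two]
  exact integral_mul_le_Lp_mul_Lq_of_nonneg Real.HolderConjugate.two_two
    (Eventually.of_forall hu0) (Eventually.of_forall hv0) (hL2 u hu) (hL2 v hv)

theorem integral_norm_mul_LSeries_le {g h : ℕ → ℂ} (hg : Summable fun n => ‖g (n + 1)‖ ^ 2)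
    (hh : Summable fun n => ‖h (n + 1)‖ ^ 2) {σ : ℝ} (hσ : 1 / 2 < σ) (τ : ℝ) :
    ∫ t in τ..τ + 1, ‖LSeries g (σ + t * I)‖ * ‖LSeries h (σ + t * I)‖ ≤
      36 * (√(∑' n, ‖g (n + 1)‖ ^ 2) * √(∑' n, ‖h (n + 1)‖ ^ 2)) := by
  have h36 : √(36 : ℝ) = 6 := by
    rw [show (36 : ℝ) = 6 ^ 2 by norm_num, Real.sqrt_sq (by norm_num)]
  calc ∫ t in τ..τ + 1, ‖LSeries g (σ + t * I)‖ * ‖LSeries h (σ + t * I)‖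
      ≤ √(∫ t in τ..τ + 1, ‖LSeries g (σ + t * I)‖ ^ 2) *
          √(∫ t in τ..τ + 1, ‖LSeries h (σ + t * I)‖ ^ 2) :=
        intervalIntegral_mul_le_sqrt_mul_sqrt (by linarith)
          (continuous_LSeries_of_summable_sq hg hσ).norm
          (continuous_LSeries_of_summable_sq hh hσ).norm (fun _ => norm_nonneg _)
          (fun _ => norm_nonneg _)
    _ ≤ √(36 * ∑' n, ‖g (n + 1)‖ ^ 2) * √(36 * ∑' n, ‖h (n + 1)‖ ^ 2) := by
        gcongr
        · exact integral_norm_sq_LSeries_le hg hσ τ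
        · exact integral_norm_sq_LSeries_le hh hσ τ
    _ = 36 * (√(∑' n, ‖g (n + 1)‖ ^ 2) * √(∑' n, ‖h (n + 1)‖ ^ 2)) := by
        rw [Real.sqrt_mul (by norm_num), Real.sqrt_mul (by norm_num), h36]
        ring

theorem integral_norm_sum_LSeries_mul_le {ι : Type*} [Fintype ι] {g h : ι → ℕ → ℂ}
    (hg : ∀ j, Summable fun n => ‖g j (n + 1)‖ ^ 2) (hh : ∀ j, Summable fun n => ‖h j (n + 1)‖ ^ 2)
    {σ : ℝ} (hσ : 1 / 2 < σ) (τ : ℝ) :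
    ∫ t in τ..τ + 1, ‖∑ j, LSeries (g j) (σ + t * I) * LSeries (h j) (σ + t * I)‖ ≤
      36 * ∑ j, √(∑' n, ‖g j (n + 1)‖ ^ 2) * √(∑' n, ‖h j (n + 1)‖ ^ 2) := by
  have hcont : ∀ j, Continuous fun t : ℝ =>
      ‖LSeries (g j) (σ + t * I)‖ * ‖LSeries (h j) (σ + t * I)‖ := fun j =>
    (continuous_LSeries_of_summable_sq (hg j) hσ).norm.mul
      (continuous_LSeries_of_summable_sq (hh j) hσ).norm
  calc ∫ t in τ..τ + 1, ‖∑ j, LSeries (g j) (σ + t * I) * LSeries (h j) (σ + t * I)‖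
      ≤ ∫ t in τ..τ + 1, ∑ j, ‖LSeries (g j) (σ + t * I)‖ * ‖LSeries (h j) (σ + t * I)‖ := by
        refine intervalIntegral.integral_mono_on (by linarith) ?_
          ((continuous_finsetSum _ fun j _ => hcont j).intervalIntegrable _ _) fun t _ => ?_
        · exact ((continuous_finsetSum _ fun j _ =>
            (continuous_LSeries_of_summable_sq (hg j) hσ).mul
              (continuous_LSeries_of_summable_sq (hh j) hσ)).norm.intervalIntegrable _ _)
        · exact (norm_sum_le _ _).trans_eq (by simp only [norm_mul])
    _ = ∑ j, ∫ t in τ..τ + 1, ‖LSeries (g j) (σ + t * I)‖ * ‖LSeries (h j) (σ + t * I)‖ :=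
        intervalIntegral.integral_finsetSum fun j _ => (hcont j).intervalIntegrable _ _
    _ ≤ 36 * ∑ j, √(∑' n, ‖g j (n + 1)‖ ^ 2) * √(∑' n, ‖h j (n + 1)‖ ^ 2) := by
        rw [mul_sum]
        exact sum_le_sum fun j _ => integral_norm_mul_LSeries_le (hg j) (hh j) hσ τ

lemma LSeries_eq_sum_Icc {a : ℕ → ℂ} {N : ℕ} (ha : ∀ n, N < n → a n = 0) (s : ℂ) :
    LSeries a s = ∑ n ∈ Icc 1 N, a n * (n : ℂ) ^ (-s) := by
  rw [LSeries, tsum_eq_sum (s := Icc 1 N) fun n hn => ?_]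
  · refine sum_congr rfl fun n hn => ?_
    rw [LSeries.term_of_ne_zero (by simp at hn; omega), Complex.cpow_neg, div_eq_mul_inv]
  · rcases Nat.eq_zero_or_pos n with rfl | hpos
    · exact LSeries.term_zero a s
    · rw [LSeries.term_of_ne_zero hpos.ne', ha n (by simp at hn; omega), zero_div]

lemma LSeries_eq_sum_mul_LSeries {ι : Type*} [Fintype ι] {a : ℕ → ℂ} {g h : ι → ℕ → ℂ}
    (ha : ∀ n : ℕ, 1 ≤ n → a n = ∑ j, ∑ p ∈ n.divisorsAntidiagonal, g j p.1 * h j p.2)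
    {s : ℂ} (hg : ∀ j, LSeriesSummable (g j) s) (hh : ∀ j, LSeriesSummable (h j) s) :
    LSeries a s = ∑ j, LSeries (g j) s * LSeries (h j) s := by
  have hconv : ∀ {n}, n ≠ 0 → a n = (∑ j, LSeries.convolution (g j) (h j)) n := fun hn => by
    simp only [ha _ (Nat.one_le_iff_ne_zero.mpr hn), Finset.sum_apply, LSeries.convolution_def]
  rw [LSeries_congr hconv, LSeries_sum fun j _ => (hg j).convolution (hh j)]
  exact sum_congr rfl fun j _ => LSeries_convolution' (hg j) (hh j)

/-- local embedding of Helson's space `𝒦 = ℋ² ⊙ ℋ²` into `H¹` of the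
half-plane: there is `C > 0` such that `∫_τ^{τ+1} |f(1/2 + it)| dt ≤ C ‖f‖_𝒦` for every
`τ ∈ ℝ` and every Dirichlet polynomial `f`. The Helson norm is handled by quantifying
over all finite representations `f = ∑_j g_j h_j` with `g_j, h_j ∈ ℋ²`. -/
theorem statement18 :
    ∃ C > 0, ∀ (τ : ℝ) (a : ℕ → ℂ) (N : ℕ), (∀ n, N < n → a n = 0) →
      ∀ (J : ℕ) (g h : Fin J → ℕ → ℂ),
        (∀ j, Summable fun n : ℕ => ‖g j (n + 1)‖ ^ 2) →
        (∀ j, Summable fun n : ℕ => ‖h j (n + 1)‖ ^ 2) →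
        (∀ n : ℕ, 1 ≤ n →
          a n = ∑ j, ∑ p ∈ n.divisorsAntidiagonal, g j p.1 * h j p.2) →
        (∫ t in τ..(τ + 1),
          ‖∑ n ∈ Finset.Icc 1 N, a n * (n : ℂ) ^ (-(1 / 2 + t * Complex.I))‖) ≤
          C * ∑ j, Real.sqrt (∑' n : ℕ, ‖g j (n + 1)‖ ^ 2) *
            Real.sqrt (∑' n : ℕ, ‖h j (n + 1)‖ ^ 2) := by
  refine ⟨36, by norm_num, fun τ a N ha J g h hg hh hconv => ?_⟩
  let F : ℝ → ℝ := fun σ => ∫ t in τ..τ + 1, ‖∑ n ∈ Icc 1 N, a n * (n : ℂ) ^ (-(σ + t * I))‖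
  have hF : Continuous F := by
    refine intervalIntegral.continuous_parametric_intervalIntegral_of_continuous' ?_ _ _
    refine (continuous_finsetSum _ fun n hn => continuous_const.mul ?_).norm
    exact continuous_const.cpow (by fun_prop) fun _ => Or.inl (by simp at hn; simp; omega)
  have hbound : ∀ σ ∈ Set.Ioi (1 / 2 : ℝ), F σ ≤
      36 * ∑ j, √(∑' n, ‖g j (n + 1)‖ ^ 2) * √(∑' n, ‖h j (n + 1)‖ ^ 2) := fun σ hσ => by
    have hσ' : ∀ t : ℝ, 1 / 2 < (σ + t * I).re := fun t => by simpa using hσ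
    simp only [F, ← LSeries_eq_sum_Icc ha, LSeries_eq_sum_mul_LSeries hconv
      (fun j => LSeriesSummable_of_summable_sq (hg j) (hσ' _))
      (fun j => LSeriesSummable_of_summable_sq (hh j) (hσ' _))]
    exact integral_norm_sum_LSeries_mul_le hg hh hσ τ
  have := hF.continuousWithinAt.closure_le (x := 1 / 2) (by simp) continuousWithinAt_const hbound
  simpa [F] using this
end
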